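/- arXiv:2008.06164 — 2 statements merged into one kernel-verified Lean document; each statement's English description precedes it below -/
import Mathlib

section
/- Let y = x + n, ŷ = y + αz with α ≠ 0. Suppose E[n|x]=0, E[z|x]=0, z is independent of n given x, and Cov(z,z|x)=Cov(n,n|x). Then for every linear map R: R^m → R^m, E[‖R ŷ − (y − z/α)‖²] = E[‖R ŷ − x‖²] + E[‖n − z/α‖²]. In particular the two objective functions differ by a constant independent of R. -/
/-!
Write `w = n - α⁻¹ z`, so that `R ŷ - (y - α⁻¹ z) = (R ŷ - x) - w` and the claim is the
Pythagorean identity for `R ŷ - x` and `w` in `L²`; it remains to see `E⟪R ŷ - x, w⟫ = 0`.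
Since `R ŷ - x = (R x - x) + R n + α R z`, this inner product splits into
* `E⟪R x - x, w⟫`, which vanishes because `R x - x` is `σ(x)`-measurable and `E[w | x] = 0`;
* the cross terms `E⟪R n, z⟫` and `E⟪R z, n⟫`, which vanish because, conditionally on `x`, `n`
  and `z` are independent and centred;
* `E⟪R n, n⟫ - E⟪R z, z⟫`, which vanishes because a quadratic form only sees second moments and
  `n`, `z` have the same conditional second moments.
-/

open MeasureTheory ProbabilityTheory Filter
open scoped RealInnerProductSpace

section

variable {Ω : Type*} {m mΩ : MeasurableSpace Ω} {μ : Measure Ω}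

theorem integral_eq_zero_of_condExp_eq_zero [IsFiniteMeasure μ] (hm : m ≤ mΩ) {f : Ω → ℝ}
    (hf : μ[f | m] =ᵐ[μ] 0) : ∫ ω, f ω ∂μ = 0 := by
  rw [← integral_condExp hm, integral_congr_ae hf, integral_zero']

section Bilinear

variable {E F G : Type*}
  [NormedAddCommGroup E] [NormedSpace ℝ E] [CompleteSpace E] [MeasurableSpace E] [BorelSpace E]
  [SecondCountableTopology E]
  [NormedAddCommGroup F] [NormedSpace ℝ F] [CompleteSpace F] [MeasurableSpace F] [BorelSpace F]
  [SecondCountableTopology F]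
  [NormedAddCommGroup G] [NormedSpace ℝ G] [CompleteSpace G]

theorem ProbabilityTheory.CondIndepFun.condExp_bilin [StandardBorelSpace Ω] [IsFiniteMeasure μ]
    {hm : m ≤ mΩ} {f : Ω → E} {g : Ω → F} (hfg : CondIndepFun m hm f g μ) (hf : Measurable f)
    (hg : Measurable g) (hfi : Integrable f μ) (hgi : Integrable g μ)
    (B : E →L[ℝ] F →L[ℝ] G) (hB : Integrable (fun ω ↦ B (f ω) (g ω)) μ) :
    μ[fun ω ↦ B (f ω) (g ω) | m] =ᵐ[μ] fun ω ↦ B (μ[f | m] ω) (μ[g | m] ω) := by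
  have hindep : ∀ᵐ ω ∂μ, IndepFun f g (condExpKernel μ m ω) := by
    refine ae_of_ae_trim hm ?_
    filter_upwards [(condIndepFun_iff_map_prod_eq_prod_map_map hf hg).1 hfg] with ω hω
    rw [indepFun_iff_map_prod_eq_prod_map_map hf.aemeasurable hg.aemeasurable]
    simpa [Kernel.map_apply _ (hf.prodMk hg), Kernel.prod_apply, Kernel.map_apply _ hf,
      Kernel.map_apply _ hg] using hω
  filter_upwards [condExp_ae_eq_integral_condExpKernel hm hB,
    condExp_ae_eq_integral_condExpKernel hm hfi, condExp_ae_eq_integral_condExpKernel hm hgi,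
    hindep, hfi.condExpKernel_ae, hgi.condExpKernel_ae] with ω hBω hfω hgω hω hfiω hgiω
  rw [hBω, hfω, hgω]
  exact hω.integral_bilin hfiω hgiω B

end Bilinear

section InnerProduct

variable {E : Type*} [NormedAddCommGroup E] [InnerProductSpace ℝ E]

theorem MeasureTheory.MemLp.integrable_inner {f g : Ω → E} (hf : MemLp f 2 μ)
    (hg : MemLp g 2 μ) : Integrable (fun ω ↦ ⟪f ω, g ω⟫) μ :=
  (hf.norm.integrable_mul hg.norm).mono (hf.1.inner hg.1) <|
    ae_of_all _ fun ω ↦ by simpa using abs_real_inner_le_norm (f ω) (g ω)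

theorem integral_inner_eq_zero_of_condExp_eq_zero [CompleteSpace E] [IsFiniteMeasure μ]
    (hm : m ≤ mΩ) {f g : Ω → E} (hf : StronglyMeasurable[m] f)
    (hfg : Integrable (fun ω ↦ ⟪f ω, g ω⟫) μ) (hg : Integrable g μ) (hgc : μ[g | m] =ᵐ[μ] 0) :
    ∫ ω, ⟪f ω, g ω⟫ ∂μ = 0 := by
  refine integral_eq_zero_of_condExp_eq_zero hm ?_
  filter_upwards [condExp_bilin_of_stronglyMeasurable_left (innerSL ℝ) hf hfg hg, hgc]
    with ω hω hgω
  exact hω.trans (by simp [hgω])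

theorem ProbabilityTheory.CondIndepFun.integral_inner_eq_zero [CompleteSpace E]
    [MeasurableSpace E] [BorelSpace E] [SecondCountableTopology E]
    [StandardBorelSpace Ω] [IsFiniteMeasure μ] {hm : m ≤ mΩ} {f g : Ω → E}
    (hfg : CondIndepFun m hm f g μ) (hf : Measurable f) (hg : Measurable g)
    (hf2 : MemLp f 2 μ) (hg2 : MemLp g 2 μ) (hgc : μ[g | m] =ᵐ[μ] 0) :
    ∫ ω, ⟪f ω, g ω⟫ ∂μ = 0 := by
  refine integral_eq_zero_of_condExp_eq_zero hm ?_
  filter_upwards [hfg.condExp_bilin hf hg (hf2.integrable one_le_two) (hg2.integrable one_le_two)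
    (innerSL ℝ) (hf2.integrable_inner hg2), hgc] with ω hω hgω
  exact hω.trans (by simp [hgω])

theorem integral_norm_sub_sq_of_integral_inner_eq_zero {f g : Ω → E} (hf : MemLp f 2 μ)
    (hg : MemLp g 2 μ) (hfg : ∫ ω, ⟪f ω, g ω⟫ ∂μ = 0) :
    ∫ ω, ‖f ω - g ω‖ ^ 2 ∂μ = ∫ ω, ‖f ω‖ ^ 2 ∂μ + ∫ ω, ‖g ω‖ ^ 2 ∂μ := by
  have hsq := hf.norm.integrable_sq
  have hinner := (hf.integrable_inner hg).const_mul 2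
  simp_rw [norm_sub_sq_real]
  rw [integral_add (f := fun ω ↦ ‖f ω‖ ^ 2 - 2 * ⟪f ω, g ω⟫) (hsq.sub hinner)
      hg.norm.integrable_sq, integral_sub hsq hinner, integral_const_mul, hfg, mul_zero, sub_zero]

theorem integral_norm_map_sub_sq_eq_add_of_moments {x n z : Ω → E} (hx : MemLp x 2 μ)
    (hn : MemLp n 2 μ) (hz : MemLp z 2 μ) (R : E →L[ℝ] E) {α : ℝ} (hα : α ≠ 0)
    (hbias : ∫ ω, ⟪R (x ω) - x ω, n ω - α⁻¹ • z ω⟫ ∂μ = 0)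
    (hnz : ∫ ω, ⟪R (n ω), z ω⟫ ∂μ = 0) (hzn : ∫ ω, ⟪R (z ω), n ω⟫ ∂μ = 0)
    (hnn : ∫ ω, ⟪R (n ω), n ω⟫ ∂μ = ∫ ω, ⟪R (z ω), z ω⟫ ∂μ) :
    ∫ ω, ‖R (x ω + n ω + α • z ω) - (x ω + n ω - α⁻¹ • z ω)‖ ^ 2 ∂μ
      = ∫ ω, ‖R (x ω + n ω + α • z ω) - x ω‖ ^ 2 ∂μ + ∫ ω, ‖n ω - α⁻¹ • z ω‖ ^ 2 ∂μ := by
  have hRx := (R.comp_memLp' hx).sub hx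
  have hRn := R.comp_memLp' hn
  have hRz := R.comp_memLp' hz
  have hw : MemLp (fun ω ↦ n ω - α⁻¹ • z ω) 2 μ := hn.sub (hz.const_smul α⁻¹)
  have hexpand : ∀ ω, ⟪R (x ω + n ω + α • z ω) - x ω, n ω - α⁻¹ • z ω⟫
      = ⟪R (x ω) - x ω, n ω - α⁻¹ • z ω⟫ + (⟪R (n ω), n ω⟫ - ⟪R (z ω), z ω⟫)
        + (α * ⟪R (z ω), n ω⟫ - α⁻¹ * ⟪R (n ω), z ω⟫) := by
    intro ω
    simp only [map_add, map_smul, inner_add_left, inner_sub_left, inner_sub_right,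
      real_inner_smul_left, real_inner_smul_right]
    field_simp
    ring
  have hcross : ∫ ω, ⟪R (x ω + n ω + α • z ω) - x ω, n ω - α⁻¹ • z ω⟫ ∂μ = 0 := by
    have hbias_int := hRx.integrable_inner hw
    have hnn_int := hRn.integrable_inner hn
    have hzz_int := hRz.integrable_inner hz
    have hnz_int := hRn.integrable_inner hz
    have hzn_int := hRz.integrable_inner hn
    simp_rw [hexpand]
    rw [integral_add, integral_add, integral_sub, integral_sub, integral_const_mul,
      integral_const_mul, hbias, hnn, hnz, hzn]
    · ring
    all_goals fun_prop
  have hA : MemLp (fun ω ↦ R (x ω + n ω + α • z ω) - x ω) 2 μ :=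
    (R.comp_memLp' ((hx.add hn).add (hz.const_smul α))).sub hx
  convert integral_norm_sub_sq_of_integral_inner_eq_zero hA hw hcross using 4 with ω
  rw [sub_sub, add_sub_assoc]

end InnerProduct

theorem EuclideanSpace.inner_map_self_eq_sum {ι : Type*} [Fintype ι] [DecidableEq ι]
    (T : EuclideanSpace ℝ ι →L[ℝ] EuclideanSpace ℝ ι) (v : EuclideanSpace ℝ ι) :
    ⟪T v, v⟫ =
      ∑ i, ∑ j, v i * v j * ⟪T (EuclideanSpace.single j 1), EuclideanSpace.single i 1⟫ := by
  conv_lhs => rw [← (EuclideanSpace.basisFun ι ℝ).sum_repr v]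
  simp [map_sum, sum_inner, inner_sum, real_inner_smul_left, real_inner_smul_right, mul_assoc]

theorem integral_inner_map_self_eq_of_integral_mul_eq {ι : Type*} [Fintype ι] [DecidableEq ι]
    {f g : Ω → EuclideanSpace ℝ ι} (hf : MemLp f 2 μ) (hg : MemLp g 2 μ)
    (hfg : ∀ i j, ∫ ω, f ω i * f ω j ∂μ = ∫ ω, g ω i * g ω j ∂μ)
    (T : EuclideanSpace ℝ ι →L[ℝ] EuclideanSpace ℝ ι) :
    ∫ ω, ⟪T (f ω), f ω⟫ ∂μ = ∫ ω, ⟪T (g ω), g ω⟫ ∂μ := by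
  have hmoments : ∀ h : Ω → EuclideanSpace ℝ ι, MemLp h 2 μ → ∫ ω, ⟪T (h ω), h ω⟫ ∂μ
      = ∑ i, ∑ j, (∫ ω, h ω i * h ω j ∂μ)
          * ⟪T (EuclideanSpace.single j 1), EuclideanSpace.single i 1⟫ := by
    intro h hh
    have hcoord : ∀ i, MemLp (fun ω ↦ h ω i) 2 μ := fun i ↦
      (EuclideanSpace.proj (𝕜 := ℝ) i).comp_memLp' hh
    have hprod : ∀ i j, Integrable (fun ω ↦ h ω i * h ω j) μ := fun i j ↦
      (hcoord i).integrable_mul (hcoord j)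
    simp_rw [EuclideanSpace.inner_map_self_eq_sum]
    rw [integral_finsetSum _ fun i _ ↦ integrable_finsetSum _ fun j _ ↦ (hprod i j).mul_const _]
    refine Finset.sum_congr rfl fun i _ ↦ ?_
    rw [integral_finsetSum _ fun j _ ↦ (hprod i j).mul_const _]
    exact Finset.sum_congr rfl fun j _ ↦ integral_mul_const _ _
  simp only [hmoments f hf, hmoments g hg, hfg]

end

theorem stmt_3 {Ω : Type*} [MeasurableSpace Ω] [StandardBorelSpace Ω]
    (μ : Measure Ω) [IsProbabilityMeasure μ]
    {m : ℕ} (x n z : Ω → EuclideanSpace ℝ (Fin m))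
    (hx : Measurable x) (hn : Measurable n) (hz : Measurable z)
    (hx2 : MemLp x 2 μ) (hn2 : MemLp n 2 μ) (hz2 : MemLp z 2 μ)
    (hncond : μ[n | MeasurableSpace.comap x inferInstance] =ᵐ[μ] 0)
    (hzcond : μ[z | MeasurableSpace.comap x inferInstance] =ᵐ[μ] 0)
    (hindep : CondIndepFun (MeasurableSpace.comap x inferInstance) hx.comap_le n z μ)
    (hcov : ∀ i j : Fin m,
      μ[fun ω => n ω i * n ω j | MeasurableSpace.comap x inferInstance]
        =ᵐ[μ] μ[fun ω => z ω i * z ω j | MeasurableSpace.comap x inferInstance])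
    (α : ℝ) (hα : α ≠ 0)
    (y yhat : Ω → EuclideanSpace ℝ (Fin m))
    (hy : y = fun ω => x ω + n ω) (hyhat : yhat = fun ω => y ω + α • z ω)
    (R : EuclideanSpace ℝ (Fin m) →L[ℝ] EuclideanSpace ℝ (Fin m)) :
    ∫ ω, ‖R (yhat ω) - (y ω - α⁻¹ • z ω)‖ ^ 2 ∂μ
      = ∫ ω, ‖R (yhat ω) - x ω‖ ^ 2 ∂μ + ∫ ω, ‖n ω - α⁻¹ • z ω‖ ^ 2 ∂μ := by
  subst hy hyhat
  set mx := MeasurableSpace.comap x inferInstance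
  have hm : mx ≤ _ := hx.comap_le
  have hw2 := hn2.sub (hz2.const_smul α⁻¹)
  have hwc : μ[n - α⁻¹ • z | mx] =ᵐ[μ] 0 := by
    filter_upwards [condExp_sub (hn2.integrable one_le_two)
      ((hz2.const_smul α⁻¹).integrable one_le_two) mx, condExp_smul α⁻¹ z mx, hncond, hzcond]
      with ω hsub hsmul hnω hzω
    rw [hsub, Pi.sub_apply, hsmul, Pi.smul_apply, hnω, hzω]
    simp
  have hbias := integral_inner_eq_zero_of_condExp_eq_zero hm
    ((R.measurable.sub measurable_id).comp (comap_measurable x)).stronglyMeasurable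
    (((R.comp_memLp' hx2).sub hx2).integrable_inner hw2) (hw2.integrable one_le_two) hwc
  refine integral_norm_map_sub_sq_eq_add_of_moments hx2 hn2 hz2 R hα hbias ?_ ?_ ?_
  · exact (hindep.comp R.measurable measurable_id).integral_inner_eq_zero
      (R.measurable.comp hn) hz (R.comp_memLp' hn2) hz2 hzcond
  · exact (hindep.symm.comp R.measurable measurable_id).integral_inner_eq_zero
      (R.measurable.comp hz) hn (R.comp_memLp' hz2) hn2 hncond
  · refine integral_inner_map_self_eq_of_integral_mul_eq hn2 hz2 (fun i j ↦ ?_) R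
    rw [← integral_condExp hm, integral_congr_ae (hcov i j), integral_condExp hm]
end

section
/- Let J be a convex functional on a convex set C of the form J(R) = E[‖R(ŷ) − w‖²] for a fixed square-integrable random vector w, and let R* ∈ C satisfy J(R*) ≤ inf_{R∈C} J(R) + δ. Then for every R ∈ C and every s ∈ (0,1], (1−s) E[‖R(ŷ) − R*(ŷ)‖²] ≤ E[‖R(ŷ) − w‖²] − E[‖R*(ŷ) − w‖²] + δ/s. -/
/-!
Write `d = R - R*` and `a = R* - w`, viewed in `L²`. The mixture `R* + s d` lies in `C`, so
near-optimality gives `‖a‖² ≤ ‖a + s d‖² + δ = ‖a‖² + 2s⟪a, d⟫ + s²‖d‖² + δ`.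
Dividing by `s` yields `0 ≤ 2⟪a, d⟫ + s‖d‖² + δ/s`, which is the claim after expanding
`‖R - w‖² = ‖a + d‖²`.
-/

open MeasureTheory

section InnerProductSpace

variable {E : Type*} [NormedAddCommGroup E] [InnerProductSpace ℝ E]

theorem one_sub_mul_norm_sub_sq_le_of_almost_minimal {x xstar w : E} {δ s : ℝ} (hs : 0 < s)
    (hmin : ‖xstar - w‖ ^ 2 ≤ ‖s • x + (1 - s) • xstar - w‖ ^ 2 + δ) :
    (1 - s) * ‖x - xstar‖ ^ 2 ≤ ‖x - w‖ ^ 2 - ‖xstar - w‖ ^ 2 + δ / s := by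
  have expand : ∀ t : ℝ, ‖t • x + (1 - t) • xstar - w‖ ^ 2
      = ‖xstar - w‖ ^ 2 + 2 * t * inner ℝ (xstar - w) (x - xstar) + t ^ 2 * ‖x - xstar‖ ^ 2 := by
    intro t
    have : t • x + (1 - t) • xstar - w = (xstar - w) + t • (x - xstar) := by
      rw [smul_sub, sub_smul, one_smul]; abel
    rw [this, norm_add_sq_real, real_inner_smul_right, norm_smul, Real.norm_eq_abs, mul_pow,
      sq_abs]
    ring
  have hx := expand 1
  rw [one_smul, sub_self, zero_smul, add_zero] at hx
  rw [expand s] at hmin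
  set B := inner ℝ (xstar - w) (x - xstar)
  set A := ‖x - xstar‖ ^ 2
  have hdiv : 0 ≤ 2 * B + s * A + δ / s := by
    refine nonneg_of_mul_nonneg_right ?_ hs
    calc 0 ≤ 2 * s * B + s ^ 2 * A + δ := by linarith
      _ = s * (2 * B + s * A + δ / s) := by field_simp
  rw [hx]
  linarith

end InnerProductSpace

namespace MeasureTheory.MemLp

variable {Ω : Type*} [MeasurableSpace Ω] {μ : Measure Ω}
  {E : Type*} [NormedAddCommGroup E] [InnerProductSpace ℝ E]

theorem norm_toLp_sq {f : Ω → E} (hf : MemLp f 2 μ) :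
    ‖hf.toLp f‖ ^ 2 = ∫ ω, ‖f ω‖ ^ 2 ∂μ := by
  rw [← real_inner_self_eq_norm_sq, L2.inner_def]
  refine integral_congr_ae ?_
  filter_upwards [hf.coeFn_toLp] with ω hω
  rw [hω, real_inner_self_eq_norm_sq]

theorem norm_toLp_sub_toLp_sq {f g : Ω → E} (hf : MemLp f 2 μ) (hg : MemLp g 2 μ) :
    ‖hf.toLp f - hg.toLp g‖ ^ 2 = ∫ ω, ‖f ω - g ω‖ ^ 2 ∂μ := by
  rw [← toLp_sub, norm_toLp_sq]
  rfl

end MeasureTheory.MemLp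

theorem stmt_10_general {Ω : Type*} [MeasurableSpace Ω] (μ : Measure Ω)
    {m : ℕ} (yhat w : Ω → EuclideanSpace ℝ (Fin m))
    (hw2 : MemLp w 2 μ)
    (C : Set (EuclideanSpace ℝ (Fin m) → EuclideanSpace ℝ (Fin m)))
    (hCconv : ∀ R₁ ∈ C, ∀ R₂ ∈ C, ∀ t ∈ Set.Icc (0 : ℝ) 1,
      (fun v => t • R₁ v + (1 - t) • R₂ v) ∈ C)
    (hC2 : ∀ R ∈ C, MemLp (fun ω => R (yhat ω)) 2 μ)
    (δ : ℝ)
    (Rstar : EuclideanSpace ℝ (Fin m) → EuclideanSpace ℝ (Fin m)) (hRstar : Rstar ∈ C)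
    (hmin : ∀ R ∈ C,
      ∫ ω, ‖Rstar (yhat ω) - w ω‖ ^ 2 ∂μ ≤ (∫ ω, ‖R (yhat ω) - w ω‖ ^ 2 ∂μ) + δ) :
    ∀ R ∈ C, ∀ s ∈ Set.Ioc (0 : ℝ) 1,
      (1 - s) * ∫ ω, ‖R (yhat ω) - Rstar (yhat ω)‖ ^ 2 ∂μ
        ≤ (∫ ω, ‖R (yhat ω) - w ω‖ ^ 2 ∂μ) - (∫ ω, ‖Rstar (yhat ω) - w ω‖ ^ 2 ∂μ) + δ / s := by
  intro R hR s ⟨hs0, hs1⟩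
  have hmix := hCconv R hR Rstar hRstar s ⟨hs0.le, hs1⟩
  have hR2 := hC2 R hR
  have hRstar2 := hC2 Rstar hRstar
  have mix_toLp : (hC2 _ hmix).toLp _ = s • hR2.toLp _ + (1 - s) • hRstar2.toLp _ := by
    rw [← MemLp.toLp_const_smul, ← MemLp.toLp_const_smul, ← MemLp.toLp_add]
    rfl
  have hmin_mix := hmin _ hmix
  rw [← hRstar2.norm_toLp_sub_toLp_sq hw2, ← (hC2 _ hmix).norm_toLp_sub_toLp_sq hw2,
    mix_toLp] at hmin_mix
  rw [← hR2.norm_toLp_sub_toLp_sq hRstar2, ← hR2.norm_toLp_sub_toLp_sq hw2,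
    ← hRstar2.norm_toLp_sub_toLp_sq hw2]
  exact one_sub_mul_norm_sub_sq_le_of_almost_minimal hs0 hmin_mix

theorem stmt_10 {Ω : Type*} [MeasurableSpace Ω] (μ : Measure Ω) [IsProbabilityMeasure μ]
    {m : ℕ} (yhat w : Ω → EuclideanSpace ℝ (Fin m))
    (hyhat2 : MemLp yhat 2 μ) (hw2 : MemLp w 2 μ)
    (C : Set (EuclideanSpace ℝ (Fin m) → EuclideanSpace ℝ (Fin m)))
    (hCconv : ∀ R₁ ∈ C, ∀ R₂ ∈ C, ∀ t ∈ Set.Icc (0 : ℝ) 1,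
      (fun v => t • R₁ v + (1 - t) • R₂ v) ∈ C)
    (hC2 : ∀ R ∈ C, MemLp (fun ω => R (yhat ω)) 2 μ)
    (δ : ℝ) (hδ : δ ∈ Set.Ioo (0 : ℝ) 1)
    (Rstar : EuclideanSpace ℝ (Fin m) → EuclideanSpace ℝ (Fin m)) (hRstar : Rstar ∈ C)
    (hmin : ∀ R ∈ C,
      ∫ ω, ‖Rstar (yhat ω) - w ω‖ ^ 2 ∂μ ≤ (∫ ω, ‖R (yhat ω) - w ω‖ ^ 2 ∂μ) + δ) :
    ∀ R ∈ C, ∀ s ∈ Set.Ioc (0 : ℝ) 1,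
      (1 - s) * ∫ ω, ‖R (yhat ω) - Rstar (yhat ω)‖ ^ 2 ∂μ
        ≤ (∫ ω, ‖R (yhat ω) - w ω‖ ^ 2 ∂μ) - (∫ ω, ‖Rstar (yhat ω) - w ω‖ ^ 2 ∂μ) + δ / s :=
  stmt_10_general μ yhat w hw2 C hCconv hC2 δ Rstar hRstar hmin
end
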